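/- arXiv:1905.11902 — 3 statements merged into one kernel-verified Lean document; each statement's English description precedes it below -/
import Mathlib

section
/- The VC dimension of the class H_n of binary classifiers on pairs of n elements induced by partitions (where h_C(u,v)=+1 iff u and v are in the same block of partition C) is exactly n-1. -/
/-!
A set `S` of pairs shattered by partitions spans a forest: labelling every pair except `e`
by `true` yields a partition whose blocks contain all other pairs of `S` but separate the
endpoints of `e`, so every edge of the graph spanned by `S` is a bridge. A forest on `n`
vertices has at most `n - 1` edges. Conversely the `n - 1` edges of a path are shattered:
for a labelling, cut the path at its `false` edges and take the resulting segments as blocks.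
-/

open Finset SimpleGraph

variable {V : Type*}

lemma SimpleGraph.Reachable.rel_of_adj {G : SimpleGraph V} {c : Setoid V}
    (hG : ∀ ⦃a b⦄, G.Adj a b → c a b) {u v : V} (h : G.Reachable u v) : c u v := by
  obtain ⟨p⟩ := h
  induction p with
  | nil => exact c.refl' _
  | cons hadj _ ih => exact c.trans' (hG hadj) ih

lemma SimpleGraph.IsAcyclic.card_edgeSet_le [Finite V] {G : SimpleGraph V} (hG : G.IsAcyclic) :
    Nat.card G.edgeSet ≤ Nat.card V - 1 := by
  cases isEmpty_or_nonempty V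
  · simp
  obtain ⟨T, hGT, -, hT⟩ := connected_top.exists_isTree_le_of_le_of_isAcyclic le_top hG
  have hcard := (isTree_iff_connected_and_card.1 hT).2
  have := Nat.card_mono (Set.toFinite T.edgeSet) (edgeSet_mono hGT)
  omega

lemma Setoid.rel_iff_of_sym2_eq (c : Setoid V) {p q : V × V} (h : s(p.1, p.2) = s(q.1, q.2)) :
    c p.1 p.2 ↔ c q.1 q.2 := by
  rcases Sym2.mk_eq_mk_iff.1 h with rfl | rfl
  · rfl
  · exact c.comm'

def SetoidShatters (S : Finset (V × V)) : Prop :=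
  ∀ g : V × V → Bool, ∃ c : Setoid V, ∀ e ∈ S, (c e.1 e.2 ↔ g e = true)

namespace SetoidShatters

variable {S : Finset (V × V)}

lemma not_isDiag (hS : SetoidShatters S) {e : V × V} (he : e ∈ S) : ¬ s(e.1, e.2).IsDiag := by
  obtain ⟨c, hc⟩ := hS fun _ => false
  intro hdiag
  have : c e.1 e.2 := Sym2.mk_isDiag_iff.1 hdiag ▸ c.refl' _
  simpa using (hc e he).1 this

lemma injOn_sym2Mk (hS : SetoidShatters S) : Set.InjOn Sym2.mk.uncurry (S : Set (V × V)) := by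
  classical
  intro p hp q hq hpq
  by_contra hne
  obtain ⟨c, hc⟩ := hS fun e => decide (e = p)
  have hp' : c p.1 p.2 := (hc p hp).2 (by simp)
  have hq' := (hc q hq).1 ((c.rel_iff_of_sym2_eq hpq).1 hp')
  exact hne (of_decide_eq_true hq').symm

lemma isAcyclic (hS : SetoidShatters S) :
    (fromEdgeSet (Sym2.mk.uncurry '' (S : Set (V × V)))).IsAcyclic := by
  classical
  refine isAcyclic_iff_forall_adj_isBridge.2 fun v w hvw hreach => ?_
  obtain ⟨⟨e, he, hev⟩, -⟩ := fromEdgeSet_adj _ |>.1 hvw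
  obtain ⟨c, hc⟩ := hS fun e' => decide (e' ≠ e)
  have hsep : ¬ c v w := fun h => by
    simpa using (hc e he).1 ((c.rel_iff_of_sym2_eq (q := (v, w)) hev).2 h)
  refine hsep (hreach.rel_of_adj fun a b hab => ?_)
  obtain ⟨⟨⟨e', he', he'ab⟩, -⟩, hab⟩ := deleteEdges_adj.1 hab
  have hne : e' ≠ e := by rintro rfl; exact hab (by simp [← hev, he'ab])
  exact (c.rel_iff_of_sym2_eq (q := (a, b)) he'ab).1 ((hc e' he').2 (by simpa using hne))

lemma card_le [Finite V] (hS : SetoidShatters S) : #S ≤ Nat.card V - 1 := by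
  have hedges :
      (fromEdgeSet (Sym2.mk.uncurry '' (S : Set (V × V)))).edgeSet = Sym2.mk.uncurry '' S := by
    rw [edgeSet_fromEdgeSet, sdiff_eq_left, Set.disjoint_left]
    rintro _ ⟨e, he, rfl⟩
    exact hS.not_isDiag he
  calc #S = Nat.card (Sym2.mk.uncurry '' (S : Set (V × V))) := by
        rw [Nat.card_image_of_injOn hS.injOn_sym2Mk, Nat.card_coe_set_eq, Set.ncard_coe_finset]
    _ ≤ Nat.card V - 1 := hedges ▸ hS.isAcyclic.card_edgeSet_le

end SetoidShatters

def Fin.pathEdges (m : ℕ) : Finset (Fin (m + 1) × Fin (m + 1)) :=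
  univ.map
    ⟨fun i : Fin m => (i.castSucc, i.succ), fun i j h => by simpa using congrArg Prod.snd h⟩

lemma Fin.card_pathEdges (m : ℕ) : #(Fin.pathEdges m) = m := by simp [Fin.pathEdges]

lemma Fin.fst_lt_snd_of_mem_pathEdges {m : ℕ} {e} (he : e ∈ Fin.pathEdges m) : e.1 < e.2 := by
  obtain ⟨i, -, rfl⟩ := by simpa [Fin.pathEdges] using he
  exact Fin.castSucc_lt_succ

lemma Fin.setoidShatters_pathEdges (m : ℕ) : SetoidShatters (Fin.pathEdges m) := by
  intro g
  -- `k j` counts the `false` edges left of `j`, so its fibres are the segments.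
  let k : Fin (m + 1) → ℕ :=
    Fin.induction 0 fun i ki => ki + if g (i.castSucc, i.succ) then 0 else 1
  refine ⟨Setoid.ker k, ?_⟩
  simp only [Fin.pathEdges, mem_map]
  rintro _ ⟨i, -, rfl⟩
  change k i.castSucc = k i.succ ↔ g (i.castSucc, i.succ) = true
  simp [k]

theorem vc_dim_partition_classifiers_general (n : ℕ) :
    IsGreatest {k : ℕ | ∃ S : Finset (Fin n × Fin n),
      (∀ e ∈ S, e.1 < e.2) ∧ S.card = k ∧
      ∀ g : Fin n × Fin n → Bool, ∃ c : Setoid (Fin n),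
        ∀ e ∈ S, (Setoid.r e.1 e.2 ↔ g e = true)} (n - 1) := by
  constructor
  · cases n with
    | zero => exact ⟨∅, by simp, rfl, fun _ => ⟨⊥, by simp⟩⟩
    | succ m =>
      exact ⟨Fin.pathEdges m, fun _ => Fin.fst_lt_snd_of_mem_pathEdges, Fin.card_pathEdges m,
        Fin.setoidShatters_pathEdges m⟩
  · rintro k ⟨S, -, rfl, hS⟩
    simpa using SetoidShatters.card_le hS

/-- The VC dimension of the class `H_n` of classifiers on pairs of `n` elements
induced by partitions (represented as setoids), where `h_C(u,v) = +1` iff `u,v`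
are in the same block, is exactly `n - 1`.  Pairs of distinct elements are
represented as ordered pairs `(u,v)` with `u < v`; a set `S` of pairs is
shattered if every `±1` labeling `g` of `S` is realized by some partition. -/
theorem vc_dim_partition_classifiers (n : ℕ) (hn : 2 ≤ n) :
    IsGreatest {k : ℕ | ∃ S : Finset (Fin n × Fin n),
      (∀ e ∈ S, e.1 < e.2) ∧ S.card = k ∧
      ∀ g : Fin n × Fin n → Bool, ∃ c : Setoid (Fin n),
        ∀ e ∈ S, (Setoid.r e.1 e.2 ↔ g e = true)} (n - 1) :=
  vc_dim_partition_classifiers_general n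
end

section
/- The number of edge-disjoint bad triangles in a labeled complete graph is a lower bound on the correlation clustering optimum OPT. -/
/-- A triangle, given as a triple of pairwise distinct vertices, is *bad* if
exactly one of its three pair labels is `-1` (`false`). -/
def IsBadTriangle {n : ℕ} (σ : Fin n → Fin n → Bool)
    (t : Fin n × Fin n × Fin n) : Prop :=
  t.1 ≠ t.2.1 ∧ t.1 ≠ t.2.2 ∧ t.2.1 ≠ t.2.2 ∧
    ((σ t.1 t.2.1 = false ∧ σ t.1 t.2.2 = true ∧ σ t.2.1 t.2.2 = true) ∨
     (σ t.1 t.2.1 = true ∧ σ t.1 t.2.2 = false ∧ σ t.2.1 t.2.2 = true) ∨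
     (σ t.1 t.2.1 = true ∧ σ t.1 t.2.2 = true ∧ σ t.2.1 t.2.2 = false))

/-- The three (unordered) edges of a triangle. -/
def triPairs {n : ℕ} (t : Fin n × Fin n × Fin n) : Finset (Sym2 (Fin n)) :=
  {Sym2.mk t.1 t.2.1, Sym2.mk t.1 t.2.2, Sym2.mk t.2.1 t.2.2}

/-- The cost (number of mistaken pairs) of a partition `c` w.r.t. labeling `σ`:
pairs `u < v` with `σ(u,v) = +1` and `u,v` in different blocks, or
`σ(u,v) = -1` and `u,v` in the same block. -/
noncomputable def ccCost {n : ℕ} (σ : Fin n → Fin n → Bool)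
    (c : Setoid (Fin n)) : ℕ :=
  Set.ncard {e : Fin n × Fin n | e.1 < e.2 ∧ (σ e.1 e.2 = true ↔ ¬ Setoid.r e.1 e.2)}

/-! A partition (an equivalence relation) cannot agree with all three labels of a bad triangle:
two `+1` edges force the third pair into the same block, where its `-1` label is a mistake.
Choosing one sorted mistaken pair inside each triangle gives an injection of the triangles
into the mistakes, since the triangles share no pair. -/

namespace CorrelationClustering

variable {n : ℕ} (σ : Fin n → Fin n → Bool) (c : Setoid (Fin n))

def IsMistake (x y : Fin n) : Prop := σ x y = true ↔ ¬ c x y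

def mistakes : Set (Fin n × Fin n) := {e | e.1 < e.2 ∧ IsMistake σ c e.1 e.2}

theorem ccCost_eq_ncard_mistakes : ccCost σ c = (mistakes σ c).ncard := rfl

variable {σ c}

theorem isMistake_comm (hσ : ∀ u v, σ u v = σ v u) {x y : Fin n} :
    IsMistake σ c x y ↔ IsMistake σ c y x := by
  simp only [IsMistake, hσ x y, c.comm]

theorem isMistake_of_isBadTriangle {a b d : Fin n} (hb : IsBadTriangle σ (a, b, d)) :
    IsMistake σ c a b ∨ IsMistake σ c a d ∨ IsMistake σ c b d := by
  obtain ⟨-, -, -, hcase⟩ := hb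
  have hab := fun (h₁ : c a d) (h₂ : c b d) => c.trans h₁ (c.symm h₂)
  have had := fun (h₁ : c a b) (h₂ : c b d) => c.trans h₁ h₂
  have hbd := fun (h₁ : c a b) (h₂ : c a d) => c.trans (c.symm h₁) h₂
  simp only [IsMistake] at hcase ⊢
  rcases hcase with ⟨h₁, h₂, h₃⟩ | ⟨h₁, h₂, h₃⟩ | ⟨h₁, h₂, h₃⟩ <;> simp only [h₁, h₂, h₃] <;> tauto

theorem exists_mem_mistakes_of_isMistake (hσ : ∀ u v, σ u v = σ v u) {x y : Fin n}
    (hxy : x ≠ y) (h : IsMistake σ c x y) : ∃ e ∈ mistakes σ c, s(e.1, e.2) = s(x, y) := by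
  rcases hxy.lt_or_gt with hlt | hgt
  · exact ⟨(x, y), ⟨hlt, h⟩, rfl⟩
  · exact ⟨(y, x), ⟨hgt, (isMistake_comm hσ).mp h⟩, Sym2.eq_swap⟩

theorem exists_mem_mistakes_of_isBadTriangle (hσ : ∀ u v, σ u v = σ v u)
    {t : Fin n × Fin n × Fin n} (hb : IsBadTriangle σ t) :
    ∃ e ∈ mistakes σ c, s(e.1, e.2) ∈ triPairs t := by
  obtain ⟨a, b, d⟩ := t
  obtain ⟨hab, had, hbd, -⟩ := id hb
  rcases isMistake_of_isBadTriangle (c := c) hb with h | h | h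
  all_goals
    obtain ⟨e, he, hs⟩ := exists_mem_mistakes_of_isMistake hσ (by assumption) h
    exact ⟨e, he, by simp [triPairs, hs]⟩

theorem card_le_ccCost_of_disjoint_triPairs (hσ : ∀ u v, σ u v = σ v u) {m : ℕ}
    {T : Fin m → Fin n × Fin n × Fin n} (hbad : ∀ i, IsBadTriangle σ (T i))
    (hdisj : ∀ i j, i ≠ j → Disjoint (triPairs (T i)) (triPairs (T j))) (c : Setoid (Fin n)) :
    m ≤ ccCost σ c := by
  choose g hg hgT using fun i => exists_mem_mistakes_of_isBadTriangle (c := c) hσ (hbad i)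
  have hinj : g.Injective := fun i j hij => by_contra fun hne =>
    Finset.disjoint_left.mp (hdisj i j hne) (hgT i) (hij ▸ hgT j)
  calc m = (Set.univ : Set (Fin m)).ncard := by simp
    _ ≤ (mistakes σ c).ncard :=
      Set.ncard_le_ncard_of_injOn g (fun i _ => hg i) hinj.injOn (Set.toFinite _)
    _ = ccCost σ c := (ccCost_eq_ncard_mistakes σ c).symm

end CorrelationClustering

/-- The number of pairwise edge-disjoint bad triangles is a lower bound on the
correlation clustering optimum `OPT = min_C Δ_C`. -/
theorem edge_disjoint_bad_triangles_le_OPT (n m : ℕ)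
    (σ : Fin n → Fin n → Bool) (hσ : ∀ u v, σ u v = σ v u)
    (T : Fin m → Fin n × Fin n × Fin n)
    (hbad : ∀ i, IsBadTriangle σ (T i))
    (hdisj : ∀ i j, i ≠ j → Disjoint (triPairs (T i)) (triPairs (T j))) :
    m ≤ sInf {k : ℕ | ∃ c : Setoid (Fin n), k = ccCost σ c} := by
  refine le_csInf ⟨_, ⊥, rfl⟩ ?_
  rintro _ ⟨c, rfl⟩
  exact CorrelationClustering.card_le_ccCost_of_disjoint_triPairs hσ hbad hdisj c
end

section
/- If {β_T : T ∈ 𝒯} are nonnegative weights on the bad triangles of a labeled complete graph such that for every pair e the sum of β_T over bad triangles T containing e is at most 1, then the total weight ∑_{T ∈ 𝒯} β_T is at most OPT. -/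
instance {n : ℕ} (σ : Fin n → Fin n → Bool) :
    DecidablePred (IsBadTriangle σ) := fun t => by
  unfold IsBadTriangle; infer_instance

/-- The set of bad triangles, each listed once via the canonical ordering
`t.1 < t.2.1 < t.2.2`. -/
def badTriangles (n : ℕ) (σ : Fin n → Fin n → Bool) :
    Finset (Fin n × Fin n × Fin n) :=
  Finset.univ.filter (fun t => t.1 < t.2.1 ∧ t.2.1 < t.2.2 ∧ IsBadTriangle σ t)

/-! Fix a partition attaining OPT. Each bad triangle has a misclassified pair, since a partition
with all three pairs classified correctly would put two vertices in one block (via the third)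
while separating them. Charging each triangle to such a pair and swapping the order of summation
bounds the total weight by the sum, over misclassified pairs, of the packing sums, each at most 1. -/

namespace Finset

theorem sum_le_card_of_forall_exists_rel {ι κ R : Type*} [Semiring R] [PartialOrder R]
    [IsOrderedRing R] {s : Finset ι} {m : Finset κ} {β : ι → R} (r : κ → ι → Prop)
    [DecidableRel r] (hβ : ∀ i ∈ s, 0 ≤ β i) (hcover : ∀ i ∈ s, ∃ k ∈ m, r k i)
    (hpack : ∀ k ∈ m, ∑ i ∈ s with r k i, β i ≤ 1) :
    ∑ i ∈ s, β i ≤ #m := by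
  calc ∑ i ∈ s, β i
      ≤ ∑ i ∈ s, ∑ k ∈ m with r k i, β i := by
        refine sum_le_sum fun i hi => ?_
        obtain ⟨k, hk, hki⟩ := hcover i hi
        rw [sum_const, nsmul_eq_mul]
        have hcard : 1 ≤ #{k ∈ m | r k i} := card_pos.2 ⟨k, mem_filter.2 ⟨hk, hki⟩⟩
        exact le_mul_of_one_le_left (hβ i hi) (Nat.cast_one (R := R) ▸ Nat.mono_cast hcard)
    _ = ∑ k ∈ m, ∑ i ∈ s with r k i, β i := by
        simp only [sum_filter]; exact sum_comm
    _ ≤ ∑ k ∈ m, 1 := sum_le_sum hpack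
    _ = #m := by simp

end Finset

section Mistakes

variable {α : Type*} (σ : α → α → Bool) (c : Setoid α)

def IsMistake (x y : α) : Prop := σ x y = true ↔ ¬ c.r x y

theorem exists_isMistake_of_bad {a b d : α}
    (h : (σ a b = false ∧ σ a d = true ∧ σ b d = true) ∨
      (σ a b = true ∧ σ a d = false ∧ σ b d = true) ∨
      (σ a b = true ∧ σ a d = true ∧ σ b d = false)) :
    IsMistake σ c a b ∨ IsMistake σ c a d ∨ IsMistake σ c b d := by
  by_contra! hc
  simp only [IsMistake, not_iff, not_iff_not] at hc
  obtain ⟨hab, had, hbd⟩ := hc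
  rcases h with ⟨h₁, h₂, h₃⟩ | ⟨h₁, h₂, h₃⟩ | ⟨h₁, h₂, h₃⟩
  · simpa [h₁] using hab.2 (c.trans (had.1 h₂) (c.symm (hbd.1 h₃)))
  · simpa [h₂] using had.2 (c.trans (hab.1 h₁) (hbd.1 h₃))
  · simpa [h₃] using hbd.2 (c.trans (c.symm (hab.1 h₁)) (had.1 h₂))

end Mistakes

open Finset

section MistakesFin

variable {n : ℕ} (σ : Fin n → Fin n → Bool) (c : Setoid (Fin n))

open Classical in
noncomputable def mistakes : Finset (Fin n × Fin n) :=
  {e | e.1 < e.2 ∧ IsMistake σ c e.1 e.2}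

theorem mem_mistakes {e : Fin n × Fin n} :
    e ∈ mistakes σ c ↔ e.1 < e.2 ∧ IsMistake σ c e.1 e.2 := by
  simp [mistakes]

theorem ccCost_eq_card_mistakes : ccCost σ c = #(mistakes σ c) := by
  rw [ccCost, ← Set.ncard_coe_finset, mistakes, coe_filter]
  simp [IsMistake]

theorem exists_mistakes_mem_triPairs {t : Fin n × Fin n × Fin n} (ht : t ∈ badTriangles n σ) :
    ∃ e ∈ mistakes σ c, Sym2.mk e.1 e.2 ∈ triPairs t := by
  obtain ⟨a, b, d⟩ := t
  obtain ⟨hab, hbd, -, -, -, hbad⟩ := (mem_filter.1 ht).2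
  rcases exists_isMistake_of_bad σ c hbad with h | h | h
  · exact ⟨(a, b), (mem_mistakes σ c).2 ⟨hab, h⟩, by simp [triPairs]⟩
  · exact ⟨(a, d), (mem_mistakes σ c).2 ⟨hab.trans hbd, h⟩, by simp [triPairs]⟩
  · exact ⟨(b, d), (mem_mistakes σ c).2 ⟨hbd, h⟩, by simp [triPairs]⟩

end MistakesFin

theorem fractional_packing_le_OPT_general (n : ℕ)
    (σ : Fin n → Fin n → Bool)
    (β : Fin n × Fin n × Fin n → ℝ)
    (hβ : ∀ t ∈ badTriangles n σ, 0 ≤ β t)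
    (hpack : ∀ e : Fin n × Fin n, e.1 < e.2 →
      (∑ t ∈ badTriangles n σ,
        if Sym2.mk e.1 e.2 ∈ triPairs t then β t else 0) ≤ 1) :
    (∑ t ∈ badTriangles n σ, β t)
      ≤ ((sInf {k : ℕ | ∃ c : Setoid (Fin n), k = ccCost σ c} : ℕ) : ℝ) := by
  obtain ⟨c, hc⟩ :=
    Nat.sInf_mem (⟨_, ⊥, rfl⟩ : {k | ∃ c : Setoid (Fin n), k = ccCost σ c}.Nonempty)
  rw [hc, ccCost_eq_card_mistakes]
  refine sum_le_card_of_forall_exists_rel (fun e t => Sym2.mk e.1 e.2 ∈ triPairs t) hβ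
    (fun t ht => exists_mistakes_mem_triPairs σ c ht) fun e he => ?_
  rw [sum_filter]
  exact hpack e ((mem_mistakes σ c).1 he).1

/-- If nonnegative weights `β` on the bad triangles satisfy, for every pair
`e`, that the total weight of the bad triangles containing `e` is at most `1`,
then the total weight of all bad triangles is at most `OPT`. -/
theorem fractional_packing_le_OPT (n : ℕ)
    (σ : Fin n → Fin n → Bool) (hσ : ∀ u v, σ u v = σ v u)
    (β : Fin n × Fin n × Fin n → ℝ)
    (hβ : ∀ t ∈ badTriangles n σ, 0 ≤ β t)
    (hpack : ∀ e : Fin n × Fin n, e.1 < e.2 →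
      (∑ t ∈ badTriangles n σ,
        if Sym2.mk e.1 e.2 ∈ triPairs t then β t else 0) ≤ 1) :
    (∑ t ∈ badTriangles n σ, β t)
      ≤ ((sInf {k : ℕ | ∃ c : Setoid (Fin n), k = ccCost σ c} : ℕ) : ℝ) :=
  fractional_packing_le_OPT_general n σ β hβ hpack
end
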